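/- Let n > 3 and let (P,·) = μ₁,₂ⁿ. Then Z²(P,P) consists exactly of the maps θ of the form θ(x,y) = α·Δ₁,ₙ(x,y)·e_{n−1} for some α ∈ ℂ. -/

import Mathlib

open scoped BigOperators

/-- The bilinear map on `Fin n → ℂ` determined by structure constants `c`. -/
noncomputable def sb {n : ℕ} (c : Fin n → Fin n → Fin n → ℂ) :
    (Fin n → ℂ) →ₗ[ℂ] (Fin n → ℂ) →ₗ[ℂ] (Fin n → ℂ) :=
  LinearMap.mk₂ ℂ (fun x y k => ∑ a, ∑ b, c a b k * (x a * y b))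
    (fun x x' y => by
      funext k
      simp [add_mul, mul_add, Finset.sum_add_distrib])
    (fun r x y => by
      funext k
      simp only [Pi.smul_apply, smul_eq_mul, Finset.mul_sum]
      exact Finset.sum_congr rfl fun a _ => Finset.sum_congr rfl fun b _ => by ring)
    (fun x y y' => by
      funext k
      simp [mul_add, Finset.sum_add_distrib])
    (fun r x y => by
      funext k
      simp only [Pi.smul_apply, smul_eq_mul, Finset.mul_sum]
      exact Finset.sum_congr rfl fun a _ => Finset.sum_congr rfl fun b _ => by ring)

/-- The multiplication of the filiform algebra `μ₁,₂ⁿ`: with 1-based basis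
`e₁,…,eₙ`, `e_i · e_j = e_{i+j}` for `2 ≤ i+j ≤ n−1`, `i,j ≤ n−1`, together with
`eₙ·eₙ = e_{n−1}`; all other products of basis vectors are zero. -/
noncomputable def mu12 (n : ℕ) : (Fin n → ℂ) →ₗ[ℂ] (Fin n → ℂ) →ₗ[ℂ] (Fin n → ℂ) :=
  sb (fun a b k =>
    (if (a : ℕ) + (b : ℕ) + 1 = (k : ℕ) ∧ (k : ℕ) + 2 ≤ n then 1 else 0) +
    (if (a : ℕ) + 1 = n ∧ (b : ℕ) + 1 = n ∧ (k : ℕ) + 2 = n then 1 else 0))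

/-!
For each `z` the Leibniz rule makes `θ(·, z)` a derivation of `P`. In `μ₁,₂ⁿ` the powers of `e₁`
are `e₁, …, e_{n−1}` and the annihilator is `ℂ e_{n−1}`; so whenever `θ(e₁, z)` is annihilating,
`θ(e₁ e_j, z) = θ(e₁, z) e_j + e₁ θ(e_j, z)` gives `θ(e_j, z) = 0` for `1 < j < n` by induction.
This applies to `z = e₁`, since `θ(e₁, e₁) = 0`. The rule applied to `e₁ eₙ = 0` and
`eₙ eₙ = e_{n−1}` then gives `e₁ w = eₙ w = 0` for `w = θ(eₙ, e₁)`, so `w` is annihilating, and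
therefore so is `θ(e₁, z)` for every basis vector `z`. Thus the alternating map `θ` vanishes unless
both arguments lie in `{e₁, eₙ}`, which forces `θ(x, y) = Δ₁,ₙ(x, y) θ(e₁, eₙ)`. Conversely,
`α Δ₁,ₙ e_{n−1}` vanishes on products and on its own values, so all three identities hold.
-/

section StructureConstants

variable {n : ℕ} (c : Fin n → Fin n → Fin n → ℂ)

theorem sb_apply (x y : Fin n → ℂ) (k : Fin n) :
    sb c x y k = ∑ a, ∑ b, c a b k * (x a * y b) :=
  rfl

theorem sb_single_left_apply (a : Fin n) (y : Fin n → ℂ) (k : Fin n) :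
    sb c (Pi.single a 1) y k = ∑ b, c a b k * y b := by
  simp [sb_apply, Pi.single_apply]

theorem sb_single_single (a b : Fin n) :
    sb c (Pi.single a 1) (Pi.single b 1) = fun k => c a b k := by
  funext k
  simp [sb_single_left_apply, Pi.single_apply]

theorem sb_apply_eq_zero {k : Fin n} (h : ∀ a b, c a b k = 0) (x y : Fin n → ℂ) :
    sb c x y k = 0 := by
  simp [sb_apply, h]

theorem sb_comm (h : ∀ a b k, c a b k = c b a k) (x y : Fin n → ℂ) : sb c x y = sb c y x := by
  funext k
  rw [sb_apply, sb_apply, Finset.sum_comm]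
  simp only [h, mul_comm (x _)]

end StructureConstants

section Mu12

variable {n : ℕ}

theorem mu12_comm (x y : Fin n → ℂ) : mu12 n x y = mu12 n y x :=
  sb_comm _ (fun a b k => by split_ifs <;> first | rfl | omega) x y

theorem mu12_single_single (a b : Fin n) :
    mu12 n (Pi.single a 1) (Pi.single b 1) = fun k : Fin n =>
      ((if (a : ℕ) + (b : ℕ) + 1 = (k : ℕ) ∧ (k : ℕ) + 2 ≤ n then 1 else 0) +
      (if (a : ℕ) + 1 = n ∧ (b : ℕ) + 1 = n ∧ (k : ℕ) + 2 = n then 1 else 0) : ℂ) :=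
  sb_single_single _ a b

theorem mu12_single_zero_single (j : ℕ) (hj : j + 3 ≤ n) :
    mu12 n (Pi.single ⟨0, by omega⟩ 1) (Pi.single ⟨j, by omega⟩ 1) =
      Pi.single ⟨j + 1, by omega⟩ 1 := by
  funext k
  simp only [mu12_single_single, Pi.single_apply, Fin.ext_iff]
  split_ifs <;> first | omega | norm_num

theorem mu12_single_zero_single_last (hn : 2 ≤ n) :
    mu12 n (Pi.single ⟨0, by omega⟩ 1) (Pi.single ⟨n - 1, by omega⟩ 1) = 0 := by
  funext k
  simp only [mu12_single_single, Pi.zero_apply]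
  split_ifs <;> first | omega | norm_num

theorem mu12_single_last_single_last (hn : 2 ≤ n) :
    mu12 n (Pi.single ⟨n - 1, by omega⟩ 1) (Pi.single ⟨n - 1, by omega⟩ 1) =
      Pi.single ⟨n - 2, by omega⟩ 1 := by
  funext k
  simp only [mu12_single_single, Pi.single_apply, Fin.ext_iff]
  split_ifs <;> first | omega | norm_num

theorem mu12_single_sub_two (hn : 2 ≤ n) : mu12 n (Pi.single ⟨n - 2, by omega⟩ 1) = 0 :=
  (Pi.basisFun ℂ (Fin n)).ext fun b => by
    funext k
    simp only [Pi.basisFun_apply, mu12_single_single, LinearMap.zero_apply, Pi.zero_apply]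
    split_ifs <;> first | omega | norm_num

theorem mu12_apply_zero (hn : 3 ≤ n) (x y : Fin n → ℂ) : mu12 n x y ⟨0, by omega⟩ = 0 :=
  sb_apply_eq_zero _ (fun a b => by
    dsimp only
    rw [if_neg (by omega), if_neg (by omega), add_zero]) x y

theorem mu12_apply_last (hn : 1 ≤ n) (x y : Fin n → ℂ) : mu12 n x y ⟨n - 1, by omega⟩ = 0 :=
  sb_apply_eq_zero _ (fun a b => by
    dsimp only
    rw [if_neg (by omega), if_neg (by omega), add_zero]) x y

theorem mu12_single_zero_apply (k : ℕ) (hk : k + 3 ≤ n) (w : Fin n → ℂ) :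
    mu12 n (Pi.single ⟨0, by omega⟩ 1) w ⟨k + 1, by omega⟩ = w ⟨k, by omega⟩ := by
  rw [mu12, sb_single_left_apply, Fintype.sum_eq_single ⟨k, by omega⟩ fun b hb => ?_]
  · dsimp only
    rw [if_pos (by omega), if_neg (by omega), add_zero, one_mul]
  · rw [Ne, Fin.ext_iff] at hb
    dsimp only at hb ⊢
    rw [if_neg (by omega), if_neg (by omega), add_zero, zero_mul]

theorem mu12_single_last_apply (hn : 2 ≤ n) (w : Fin n → ℂ) :
    mu12 n (Pi.single ⟨n - 1, by omega⟩ 1) w ⟨n - 2, by omega⟩ = w ⟨n - 1, by omega⟩ := by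
  rw [mu12, sb_single_left_apply, Fintype.sum_eq_single ⟨n - 1, by omega⟩ fun b hb => ?_]
  · dsimp only
    rw [if_neg (by omega), if_pos (by omega), zero_add, one_mul]
  · rw [Ne, Fin.ext_iff] at hb
    dsimp only at hb ⊢
    rw [if_neg (by omega), if_neg (by omega), add_zero, zero_mul]

theorem eq_smul_single_of_mu12_eq_zero (hn : 2 ≤ n) {w : Fin n → ℂ}
    (h₀ : mu12 n (Pi.single ⟨0, by omega⟩ 1) w = 0)
    (h₁ : mu12 n (Pi.single ⟨n - 1, by omega⟩ 1) w = 0) :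
    w = w ⟨n - 2, by omega⟩ • Pi.single ⟨n - 2, by omega⟩ 1 := by
  funext ⟨k, hk⟩
  simp only [Pi.smul_apply, Pi.single_apply, Fin.ext_iff, smul_eq_mul]
  rcases (show k = n - 2 ∨ k = n - 1 ∨ k + 3 ≤ n by omega) with rfl | rfl | hk'
  · rw [if_pos rfl, mul_one]
  · rw [if_neg (by omega), mul_zero, ← mu12_single_last_apply hn w, h₁, Pi.zero_apply]
  · rw [if_neg (by omega), mul_zero, ← mu12_single_zero_apply k hk' w, h₀, Pi.zero_apply]

end Mu12

section Delta

variable {R : Type*} [CommRing R] {ι : Type*}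

variable (R) in
/-- The paper's `Δ₁,ₙ` is `delta ℂ 0 (n - 1)`: its basis is indexed from 1, ours from 0. -/
def delta (i j : ι) : (ι → R) →ₗ[R] (ι → R) →ₗ[R] R :=
  let π : ι → (ι → R) →ₗ[R] R := LinearMap.proj
  (π i).smulRight (π j) - (π j).smulRight (π i)

theorem delta_apply (i j : ι) (x y : ι → R) : delta R i j x y = x i * y j - x j * y i :=
  rfl

theorem delta_isAlt (i j : ι) : (delta R i j).IsAlt := fun x => by
  rw [delta_apply, mul_comm, sub_self]

variable [DecidableEq ι]

theorem delta_single_single {i j : ι} (hij : i ≠ j) :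
    delta R i j (Pi.single i 1) (Pi.single j 1) = 1 := by
  simp [delta_apply, hij, hij.symm]

theorem delta_single_left {i j k : ι} (hi : k ≠ i) (hj : k ≠ j) (y : ι → R) :
    delta R i j (Pi.single k 1) y = 0 := by
  simp [delta_apply, hi.symm, hj.symm]

theorem apply_apply_eq_zero_of_eq_smul_delta {f : (ι → R) →ₗ[R] (ι → R) →ₗ[R] (ι → R)} {α : R}
    {p q r : ι} (hf : ∀ x y, f x y = (α * delta R p q x y) • Pi.single r 1) (hp : r ≠ p)
    (hq : r ≠ q) (x y z : ι → R) : f (f x y) z = 0 := by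
  rw [hf (f x y), hf x y, map_smul, LinearMap.smul_apply, delta_single_left hp hq, smul_zero,
    mul_zero, zero_smul]

namespace LinearMap.IsAlt

variable {M : Type*} [AddCommGroup M] [Module R M] [Finite ι]
  {f g : (ι → R) →ₗ[R] (ι → R) →ₗ[R] M}

theorem ext_of_vanish_off_pair (hf : f.IsAlt) (hg : g.IsAlt) {p q : ι}
    (hpq : f (Pi.single p 1) (Pi.single q 1) = g (Pi.single p 1) (Pi.single q 1))
    (hf₀ : ∀ i j, i ≠ p → i ≠ q → f (Pi.single i 1) (Pi.single j 1) = 0)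
    (hg₀ : ∀ i j, i ≠ p → i ≠ q → g (Pi.single i 1) (Pi.single j 1) = 0) : f = g := by
  have off_pair : ∀ i j, i ≠ p → i ≠ q →
      f (Pi.single i 1) (Pi.single j 1) = g (Pi.single i 1) (Pi.single j 1) :=
    fun i j hp hq => by rw [hf₀ i j hp hq, hg₀ i j hp hq]
  refine LinearMap.ext_basis (Pi.basisFun R ι) (Pi.basisFun R ι) fun i j => ?_
  simp only [Pi.basisFun_apply]
  by_cases hi : i ≠ p ∧ i ≠ q
  · exact off_pair i j hi.1 hi.2
  by_cases hj : j ≠ p ∧ j ≠ q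
  · rw [← hf.neg, ← hg.neg, off_pair j i hj.1 hj.2]
  obtain ⟨rfl | rfl, rfl | rfl⟩ : (p = i ∨ q = i) ∧ (p = j ∨ q = j) := by tauto
  all_goals first
    | rw [hf.self_eq_zero, hg.self_eq_zero]
    | exact hpq
    | rw [← hf.neg, ← hg.neg, hpq]

theorem eq_delta_compr₂ (hf : f.IsAlt) {p q : ι} (hpq : p ≠ q)
    (hf₀ : ∀ i j, i ≠ p → i ≠ q → f (Pi.single i 1) (Pi.single j 1) = 0) :
    f = (delta R p q).compr₂ (toSpanSingleton R M (f (Pi.single p 1) (Pi.single q 1))) :=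
  ext_of_vanish_off_pair hf (fun x => by simp [(delta_isAlt p q).self_eq_zero x])
    (by simp [delta_single_single hpq]) hf₀ (fun i j hp hq => by simp [delta_single_left hp hq])

end LinearMap.IsAlt

end Delta

section Cocycle

variable {n : ℕ} {θ : (Fin n → ℂ) →ₗ[ℂ] (Fin n → ℂ) →ₗ[ℂ] (Fin n → ℂ)}
  (hder : ∀ x y z, θ (mu12 n x y) z = mu12 n (θ x z) y + mu12 n x (θ y z))
include hder

theorem theta_single_succ_eq_zero (hn : 2 ≤ n) {z : Fin n → ℂ} {c : ℂ}
    (hz : θ (Pi.single ⟨0, by omega⟩ 1) z = c • Pi.single ⟨n - 2, by omega⟩ 1) :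
    ∀ j (hj : j + 3 ≤ n), θ (Pi.single ⟨j + 1, by omega⟩ 1) z = 0 := by
  have hann : ∀ v, mu12 n (θ (Pi.single ⟨0, by omega⟩ 1) z) v = 0 := fun v => by
    rw [hz, map_smul, mu12_single_sub_two hn, smul_zero, LinearMap.zero_apply]
  intro j hj
  induction j with
  | zero => rw [← mu12_single_zero_single 0 hj, hder, mu12_comm _ (θ _ z), hann, add_zero]
  | succ j ih =>
    rw [← mu12_single_zero_single (j + 1) hj, hder, ih (by omega), map_zero, hann, add_zero]

theorem theta_single_zero_right (hn : 2 ≤ n) (hθ : θ.IsAlt) (j : ℕ) (hj : j + 2 ≤ n) :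
    θ (Pi.single ⟨j, by omega⟩ 1) (Pi.single ⟨0, by omega⟩ 1) = 0 := by
  cases j with
  | zero => exact hθ.self_eq_zero _
  | succ j =>
    exact theta_single_succ_eq_zero hder hn (c := 0) (by rw [hθ.self_eq_zero, zero_smul]) j hj

theorem theta_single_last_single_zero (hn : 2 ≤ n) (hθ : θ.IsAlt) :
    ∃ c : ℂ, θ (Pi.single ⟨n - 1, by omega⟩ 1) (Pi.single ⟨0, by omega⟩ 1) =
      c • Pi.single ⟨n - 2, by omega⟩ 1 := by
  set w := θ (Pi.single ⟨n - 1, by omega⟩ 1) (Pi.single ⟨0, by omega⟩ 1)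
  refine ⟨w ⟨n - 2, by omega⟩, eq_smul_single_of_mu12_eq_zero hn ?_ ?_⟩
  · have h := hder (Pi.single ⟨0, by omega⟩ 1) (Pi.single ⟨n - 1, by omega⟩ 1)
      (Pi.single ⟨0, by omega⟩ 1)
    rwa [mu12_single_zero_single_last hn, map_zero, LinearMap.zero_apply, hθ.self_eq_zero,
      map_zero, LinearMap.zero_apply, zero_add, eq_comm] at h
  · have h := hder (Pi.single ⟨n - 1, by omega⟩ 1) (Pi.single ⟨n - 1, by omega⟩ 1)
      (Pi.single ⟨0, by omega⟩ 1)
    rw [mu12_single_last_single_last hn, theta_single_zero_right hder hn hθ (n - 2) (by omega),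
      mu12_comm w] at h
    exact self_eq_neg.mp (eq_neg_of_add_eq_zero_left h.symm)

theorem theta_single_zero_left (hn : 2 ≤ n) (hθ : θ.IsAlt) (j : Fin n) :
    ∃ c : ℂ, θ (Pi.single ⟨0, by omega⟩ 1) (Pi.single j 1) =
      c • Pi.single ⟨n - 2, by omega⟩ 1 := by
  obtain ⟨j, hj⟩ := j
  obtain hj' | rfl : j + 2 ≤ n ∨ j = n - 1 := by omega
  · exact ⟨0, by rw [← hθ.neg, theta_single_zero_right hder hn hθ j hj', neg_zero, zero_smul]⟩
  · obtain ⟨c, hc⟩ := theta_single_last_single_zero hder hn hθ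
    exact ⟨-c, by rw [← hθ.neg, hc, neg_smul]⟩

theorem theta_single_single_eq_zero (hn : 2 ≤ n) (hθ : θ.IsAlt) (i j : Fin n)
    (hi₀ : i ≠ ⟨0, by omega⟩) (hi₁ : i ≠ ⟨n - 1, by omega⟩) :
    θ (Pi.single i 1) (Pi.single j 1) = 0 := by
  obtain ⟨c, hc⟩ := theta_single_zero_left hder hn hθ j
  obtain ⟨_ | i, hi⟩ := i
  · exact absurd rfl hi₀
  · rw [Ne, Fin.ext_iff] at hi₁
    exact theta_single_succ_eq_zero hder hn hc i (by dsimp only at hi₁; omega)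

theorem exists_eq_smul_delta (hn : 2 ≤ n) (hθ : θ.IsAlt) :
    ∃ α : ℂ, ∀ x y, θ x y =
      (α * delta ℂ ⟨0, by omega⟩ ⟨n - 1, by omega⟩ x y) • Pi.single ⟨n - 2, by omega⟩ 1 := by
  obtain ⟨α, hα⟩ := theta_single_zero_left hder hn hθ ⟨n - 1, by omega⟩
  refine ⟨α, fun x y => ?_⟩
  rw [hθ.eq_delta_compr₂ (by simp only [Ne, Fin.ext_iff]; omega)
      (theta_single_single_eq_zero hder hn hθ), LinearMap.compr₂_apply,
    LinearMap.toSpanSingleton_apply, hα, smul_smul, mul_comm]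

end Cocycle

/-- For n > 3, Z²(μ₁,₂ⁿ, μ₁,₂ⁿ) consists exactly of the maps
`θ(x,y) = α Δ₁ₙ(x,y) e_{n−1}` with `α ∈ ℂ`. -/
theorem stmt8 (n : ℕ) (hn : 3 < n)
    (θ : (Fin n → ℂ) →ₗ[ℂ] (Fin n → ℂ) →ₗ[ℂ] (Fin n → ℂ)) :
    ((∀ x y, θ x y = - θ y x) ∧
     (∀ x y z, θ (θ x y) z + θ (θ y z) x + θ (θ z x) y = 0) ∧
     (∀ x y z, θ (mu12 n x y) z = mu12 n (θ x z) y + mu12 n x (θ y z))) ↔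
    ∃ α : ℂ, ∀ x y : Fin n → ℂ,
      θ x y =
        (α * (x ⟨0, by omega⟩ * y ⟨n - 1, by omega⟩ -
              x ⟨n - 1, by omega⟩ * y ⟨0, by omega⟩)) •
            (Pi.single (⟨n - 2, by omega⟩ : Fin n) (1 : ℂ) : Fin n → ℂ) := by
  constructor
  · rintro ⟨hskew, -, hder⟩
    exact exists_eq_smul_delta hder (by omega) fun x => self_eq_neg.mp (hskew x x)
  · rintro ⟨α, hα⟩
    have hθθ := apply_apply_eq_zero_of_eq_smul_delta (f := θ) (α := α)
      (p := (⟨0, by omega⟩ : Fin n)) (q := ⟨n - 1, by omega⟩) (r := ⟨n - 2, by omega⟩)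
      (fun x y => by rw [hα x y, delta_apply]) (by simp only [Ne, Fin.ext_iff]; omega)
      (by simp only [Ne, Fin.ext_iff]; omega)
    refine ⟨fun x y => ?_, fun x y z => by rw [hθθ, hθθ, hθθ, add_zero, add_zero],
      fun x y z => ?_⟩
    · rw [hα x y, hα y x, ← neg_smul]
      congr 1
      ring
    · rw [hα (mu12 n x y) z, mu12_apply_zero (by omega), mu12_apply_last (by omega), hα x z,
        hα y z, map_smul, mu12_single_sub_two (by omega), mu12_comm x, map_smul,
        mu12_single_sub_two (by omega)]
      simp
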